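/- Let m, x be integers with m ≤ x ≤ 0 and let (Š_n) be the shaved walk started from (m,x). For every integer N with −N < m, letting τ_{−N} := inf{ n ≥ 0 : Š_n = −N } and τ_1 := inf{ n ≥ 0 : Š_n = 1 }, one has P( τ_{−N} < τ_1 ) = (|x|+1)(|m|+2) / ((N+1)(N+2)). -/

import Mathlib

open MeasureTheory

/-- The step distribution μ of the animal walk, evaluated on the singleton {z}. -/
noncomputable def animalStepLaw (z : ℤ) : ENNReal :=
  if z = 1 then 2/3 else if z < 0 then (2 : ENNReal) ^ z / 3 else 0

/-- The shaved walk started from (m,x) (with m ≤ x ≤ 0), driven by the increments ξ,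
together with its running minimum: `shavedFrom ξ m x n = (Š n, M n)` where
Š 0 = x, M n = min(m, Š 0, …, Š n), and
Š_{n+1} = Š_n + ξ_{n+1} if Š_n + ξ_{n+1} ≥ M_n, and Š_{n+1} = M_n − 1 otherwise.
(Here `ξ n` plays the role of the increment ξ_{n+1}.) -/
def shavedFrom (ξ : ℕ → ℤ) (m x : ℤ) : ℕ → ℤ × ℤ
  | 0 => (x, min m x)
  | n+1 =>
    let p := shavedFrom ξ m x n
    let v := if p.2 ≤ p.1 + ξ n then p.1 + ξ n else p.2 - 1
    (v, min p.2 v)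

open ProbabilityTheory Filter Topology
open scoped ENNReal

/-!
The function `h (x, m) = (1 - x) (2 - m)` is harmonic for the shaved walk on `m ≤ x ≤ 0`, vanishes
at `x = 1` and equals `H = (N + 1) (N + 2)` at `(-N, -N)`, the only state with `x = -N` that the
walk can reach. By induction on `n`, the probability `q n` of exiting through `-N` within `n` steps
and the probability `s n` of not being absorbed within `n` steps satisfy
`h - H * s n ≤ H * q n ≤ h`. Finally `s n → 0` geometrically, because from every state `N + 1`
up-steps, each of probability `2 / 3`, reach `1`.
-/

theorem ProbabilityTheory.iIndepFun.measure_prefix_mem {Ω α : Type*} [MeasurableSpace Ω]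
    {P : Measure Ω} [Countable α] [MeasurableSpace α] [MeasurableSingletonClass α]
    {ξ : ℕ → Ω → α} (hindep : iIndepFun ξ P) (hmeas : ∀ i, Measurable (ξ i))
    {law : α → ℝ≥0∞} (hlaw : ∀ i a, P {ω | ξ i ω = a} = law a) (n : ℕ)
    (S : Set (Fin n → α)) :
    P {ω | (fun i : Fin n => ξ i ω) ∈ S} = ∑' v, S.indicator (fun v => ∏ i, law (v i)) v := by
  have hcylinder (v : Fin n → α) :
      P ((fun ω (i : Fin n) => ξ i ω) ⁻¹' {v}) = ∏ i, law (v i) := by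
    have hinter : (fun ω (i : Fin n) => ξ i ω) ⁻¹' {v} =
        ⋂ i ∈ (Finset.univ : Finset (Fin n)), ξ i ⁻¹' {v i} := by
      ext ω
      simp [funext_iff]
    rw [hinter, (hindep.precomp Fin.val_injective).measure_inter_preimage_eq_mul _
      fun i _ => measurableSet_singleton (v i)]
    exact Finset.prod_congr rfl fun i _ => hlaw i (v i)
  have hprefix : Measurable fun ω (i : Fin n) => ξ i ω := measurable_pi_lambda _ fun i => hmeas i
  change P ((fun ω (i : Fin n) => ξ i ω) ⁻¹' S) = _
  rw [← tsum_measure_preimage_singleton S.to_countable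
    fun v _ => hprefix (measurableSet_singleton v), ← tsum_subtype]
  exact tsum_congr fun v => hcylinder v

namespace ShavedWalk

lemma tsum_inv_two_pow_succ : ∑' k : ℕ, (2⁻¹ : ℝ≥0∞) ^ (k + 1) = 1 := by
  rw [ENNReal.tsum_geometric_add_one, ENNReal.one_sub_inv_two, inv_inv,
    ENNReal.inv_mul_cancel two_ne_zero ENNReal.ofNat_ne_top]

lemma tsum_inv_two_pow_succ_mul_ite (d : ℕ) (c : ℝ≥0∞) :
    ∑' k : ℕ, (2⁻¹ : ℝ≥0∞) ^ (k + 1) * (if k < d then c + k else c + d + 1) = c + 1 := by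
  induction d generalizing c with
  | zero => simp [ENNReal.tsum_mul_right, tsum_inv_two_pow_succ]
  | succ d ih =>
    have htail (k : ℕ) : (2⁻¹ : ℝ≥0∞) ^ (k + 1 + 1) *
        (if k + 1 < d + 1 then c + (k + 1 : ℕ) else c + (d + 1 : ℕ) + 1) =
        2⁻¹ * ((2⁻¹ : ℝ≥0∞) ^ (k + 1) * (if k < d then (c + 1) + k else (c + 1) + d + 1)) := by
      simp only [add_lt_add_iff_right, Nat.cast_add, Nat.cast_one]
      split_ifs <;> ring
    rw [tsum_eq_zero_add' ENNReal.summable, tsum_congr htail, ENNReal.tsum_mul_left, ih,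
      if_pos d.succ_pos]
    calc (2⁻¹ : ℝ≥0∞) ^ (0 + 1) * (c + (0 : ℕ)) + 2⁻¹ * (c + 1 + 1)
        = 2⁻¹ * 2 * (c + 1) := by ring
      _ = c + 1 := by rw [ENNReal.inv_mul_cancel two_ne_zero ENNReal.ofNat_ne_top, one_mul]

lemma two_thirds_add_inv_three : (2 / 3 : ℝ≥0∞) + 3⁻¹ = 1 := by
  rw [div_eq_mul_inv, ← add_one_mul, two_add_one_eq_three,
    ENNReal.mul_inv_cancel three_ne_zero ENNReal.ofNat_ne_top]

lemma tsum_animalStepLaw_mul (F : ℤ → ℝ≥0∞) :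
    ∑' z, animalStepLaw z * F z =
      2 / 3 * F 1 + 3⁻¹ * ∑' k : ℕ, (2⁻¹ : ℝ≥0∞) ^ (k + 1) * F (-(k + 1)) := by
  rw [tsum_of_nat_of_neg_add_one ENNReal.summable ENNReal.summable,
    tsum_eq_single 1 fun n hn => by simp [animalStepLaw, hn], ← ENNReal.tsum_mul_left]
  have hone : animalStepLaw 1 = 2 / 3 := by simp [animalStepLaw]
  rw [Nat.cast_one, hone]
  refine congrArg _ (tsum_congr fun k => ?_)
  have hk : -((k : ℤ) + 1) = Int.negSucc k := rfl
  rw [animalStepLaw, if_neg (by omega), if_pos (by omega), hk, zpow_negSucc, ENNReal.inv_pow,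
    div_eq_mul_inv]
  ring

lemma tsum_animalStepLaw : ∑' z, animalStepLaw z = 1 := by
  simpa [ENNReal.tsum_mul_right, tsum_inv_two_pow_succ, two_thirds_add_inv_three]
    using tsum_animalStepLaw_mul fun _ => 1

def step (z : ℤ) (p : ℤ × ℤ) : ℤ × ℤ :=
  let v := if p.2 ≤ p.1 + z then p.1 + z else p.2 - 1
  (v, min p.2 v)

lemma step_of_le {z : ℤ} {p : ℤ × ℤ} (h : p.2 ≤ p.1 + z) : step z p = (p.1 + z, p.2) := by
  simp [step, h]

lemma step_of_lt {z : ℤ} {p : ℤ × ℤ} (h : p.1 + z < p.2) : step z p = (p.2 - 1, p.2 - 1) := by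
  simp [step, not_le.mpr h]

def walk (g : ℕ → ℤ) (p : ℤ × ℤ) : ℕ → ℤ × ℤ
  | 0 => p
  | n + 1 => step (g n) (walk g p n)

lemma shavedFrom_eq_walk (g : ℕ → ℤ) (m x : ℤ) :
    ∀ n, shavedFrom g m x n = walk g (x, min m x) n
  | 0 => rfl
  | n + 1 => by rw [shavedFrom, shavedFrom_eq_walk g m x n]; rfl

lemma walk_congr {g g' : ℕ → ℤ} {n : ℕ} (h : ∀ i < n, g i = g' i) (p : ℤ × ℤ) :
    walk g p n = walk g' p n := by
  induction n with
  | zero => rfl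
  | succ n ih => rw [walk, walk, h n n.lt_succ_self, ih fun i hi => h i (by omega)]

lemma walk_succ' (g : ℕ → ℤ) (p : ℤ × ℤ) (n : ℕ) :
    walk g p (n + 1) = walk (fun i => g (i + 1)) (step (g 0) p) n := by
  induction n with
  | zero => rfl
  | succ n ih => rw [walk, ih]; rfl

/- A state is a pair (position, running minimum). Below its minimum the walk only moves to the
minimum minus one, so it cannot jump over `-N`: the only state it reaches at `-N` is `(-N, -N)`. -/
def IsState (N : ℕ) (p : ℤ × ℤ) : Prop :=
  (-(N : ℤ) < p.2 ∧ p.2 ≤ p.1 ∧ p.1 ≤ 1) ∨ p = (-(N : ℤ), -(N : ℤ))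

def IsInterior (N : ℕ) (p : ℤ × ℤ) : Prop :=
  -(N : ℤ) < p.2 ∧ p.2 ≤ p.1 ∧ p.1 ≤ 0

section States

variable {N : ℕ} {p : ℤ × ℤ}

lemma IsState.fst_le_one (hp : IsState N p) : p.1 ≤ 1 := by
  rcases hp with hp | rfl
  · exact hp.2.2
  · simp only
    omega

lemma IsState.neg_le_fst (hp : IsState N p) : -(N : ℤ) ≤ p.1 := by
  rcases hp with hp | rfl
  · omega
  · exact le_rfl

lemma IsState.eq_of_fst_eq (hp : IsState N p) (h : p.1 = -N) : p = (-(N : ℤ), -(N : ℤ)) := by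
  rcases hp with hp | hp
  · omega
  · exact hp

lemma IsState.isInterior (hp : IsState N p) (h₁ : p.1 ≠ -N) (h₂ : p.1 ≠ 1) : IsInterior N p := by
  rcases hp with hp | rfl
  · exact ⟨hp.1, hp.2.1, by omega⟩
  · exact absurd rfl h₁

lemma IsInterior.isState_step (hp : IsInterior N p) {z : ℤ} (hz : z = 1 ∨ z < 0) :
    IsState N (step z p) := by
  obtain ⟨h₁, h₂, h₃⟩ := hp
  by_cases h : p.2 ≤ p.1 + z
  · rw [step_of_le h]
    left
    simp only
    omega
  · rw [step_of_lt (not_le.mp h)]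
    simp only [IsState, Prod.ext_iff]
    omega

end States

noncomputable def stepMean (f : ℤ × ℤ → ℝ≥0∞) (p : ℤ × ℤ) : ℝ≥0∞ :=
  ∑' z, animalStepLaw z * f (step z p)

section StepMean

variable {N : ℕ} {p : ℤ × ℤ} {f g : ℤ × ℤ → ℝ≥0∞}

lemma stepMean_mono (h : ∀ q, f q ≤ g q) (p : ℤ × ℤ) : stepMean f p ≤ stepMean g p :=
  ENNReal.tsum_le_tsum fun _ => mul_le_mul_right (h _) _

lemma stepMean_const (c : ℝ≥0∞) (p : ℤ × ℤ) : stepMean (fun _ => c) p = c := by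
  rw [stepMean, ENNReal.tsum_mul_right, tsum_animalStepLaw, one_mul]

lemma stepMean_const_mul (c : ℝ≥0∞) (f : ℤ × ℤ → ℝ≥0∞) (p : ℤ × ℤ) :
    stepMean (fun q => c * f q) p = c * stepMean f p := by
  simp_rw [stepMean, mul_left_comm _ c, ENNReal.tsum_mul_left]

lemma stepMean_add (f g : ℤ × ℤ → ℝ≥0∞) (p : ℤ × ℤ) :
    stepMean (fun q => f q + g q) p = stepMean f p + stepMean g p := by
  simp_rw [stepMean, mul_add, ENNReal.tsum_add]

lemma stepMean_eq (f : ℤ × ℤ → ℝ≥0∞) (p : ℤ × ℤ) :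
    stepMean f p =
      2 / 3 * f (step 1 p) + 3⁻¹ * ∑' k : ℕ, (2⁻¹ : ℝ≥0∞) ^ (k + 1) * f (step (-(k + 1)) p) :=
  tsum_animalStepLaw_mul _

lemma IsInterior.stepMean_mono (hp : IsInterior N p) (h : ∀ q, IsState N q → f q ≤ g q) :
    stepMean f p ≤ stepMean g p := by
  rw [stepMean_eq, stepMean_eq]
  gcongr with k
  · exact h _ (hp.isState_step (Or.inl rfl))
  · exact h _ (hp.isState_step (Or.inr (by omega)))

lemma IsInterior.stepMean_le (hp : IsInterior N p) {B : ℝ≥0∞}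
    (hB : ∀ q, IsState N q → f q ≤ B) : stepMean f p ≤ 2 / 3 * f (step 1 p) + 3⁻¹ * B := by
  rw [stepMean_eq]
  gcongr
  calc ∑' k : ℕ, (2⁻¹ : ℝ≥0∞) ^ (k + 1) * f (step (-(k + 1)) p)
      ≤ ∑' k : ℕ, (2⁻¹ : ℝ≥0∞) ^ (k + 1) * B := by
        gcongr with k
        exact hB _ (hp.isState_step (Or.inr (by omega)))
    _ = B := by rw [ENNReal.tsum_mul_right, tsum_inv_two_pow_succ, one_mul]

end StepMean

noncomputable def harmonicFun (p : ℤ × ℤ) : ℝ≥0∞ := (1 - p.1).toNat * (2 - p.2).toNat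

lemma harmonicFun_mk {x m : ℤ} {a b : ℕ} (ha : 1 - x = a) (hb : 2 - m = b) :
    harmonicFun (x, m) = a * b := by
  simp [harmonicFun, ha, hb]

lemma stepMean_harmonicFun {p : ℤ × ℤ} (h₁ : p.2 ≤ p.1) (h₂ : p.1 ≤ 0) :
    stepMean harmonicFun p = harmonicFun p := by
  obtain ⟨x, m⟩ := p
  simp only at h₁ h₂
  obtain ⟨a, rfl⟩ : ∃ a : ℕ, x = -a := ⟨(-x).toNat, by omega⟩
  obtain ⟨d, rfl⟩ : ∃ d : ℕ, m = -a - d := ⟨(-a - m).toNat, by omega⟩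
  have hup : harmonicFun (step 1 (-a, -a - d)) = a * (a + d + 2 : ℕ) := by
    rw [step_of_le (by simp only; omega)]
    exact harmonicFun_mk (by simp) (by push_cast; ring)
  -- a jump of size `k + 1 > d` is shaved to the minimum minus one
  have hdown (k : ℕ) : harmonicFun (step (-(k + 1)) (-a, -a - d)) =
      (if k < d then ((a + 2 : ℕ) : ℝ≥0∞) + k else (a + 2 : ℕ) + d + 1) * (a + d + 2 : ℕ) := by
    split_ifs with hk
    · rw [step_of_le (by simp only; omega),
        harmonicFun_mk (a := a + k + 2) (b := a + d + 2) (by push_cast; ring) (by push_cast; ring)]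
      push_cast
      ring
    · rw [step_of_lt (by simp only; omega),
        harmonicFun_mk (a := a + d + 2) (b := a + d + 3) (by push_cast; ring) (by push_cast; ring)]
      push_cast
      ring
  rw [stepMean_eq, hup, harmonicFun_mk (a := a + 1) (b := a + d + 2) (by push_cast; ring)
    (by push_cast; ring)]
  simp_rw [hdown, ← mul_assoc]
  rw [ENNReal.tsum_mul_right, tsum_inv_two_pow_succ_mul_ite]
  push_cast
  calc 2 / 3 * (a : ℝ≥0∞) * (a + d + 2) + 3⁻¹ * ((a + 2 + 1) * (a + d + 2))
      = 3⁻¹ * 3 * ((a + 1) * (a + d + 2)) := by rw [div_eq_mul_inv]; ring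
    _ = (a + 1) * (a + d + 2) := by
      rw [ENNReal.inv_mul_cancel three_ne_zero ENNReal.ofNat_ne_top, one_mul]

section HarmonicFun

variable {N : ℕ} {p : ℤ × ℤ}

lemma harmonicFun_ne_top (p : ℤ × ℤ) : harmonicFun p ≠ ⊤ :=
  ENNReal.mul_ne_top (ENNReal.natCast_ne_top _) (ENNReal.natCast_ne_top _)

lemma harmonicFun_of_fst_eq_one (h : p.1 = 1) : harmonicFun p = 0 := by
  simp [harmonicFun, h]

lemma IsState.harmonicFun_le (hp : IsState N p) : harmonicFun p ≤ harmonicFun (-N, -N) := by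
  rcases hp with hp | rfl
  · unfold harmonicFun
    gcongr <;> simp only <;> omega
  · exact le_rfl

lemma harmonicFun_of_nonpos {x m : ℤ} (hx : x ≤ 0) (hm : m ≤ 0) :
    harmonicFun (x, m) = ((x.natAbs : ℝ≥0∞) + 1) * ((m.natAbs : ℝ≥0∞) + 2) := by
  rw [harmonicFun_mk (a := x.natAbs + 1) (b := m.natAbs + 2) (by omega) (by omega)]
  push_cast
  rfl

lemma harmonicFun_neg_natCast (N : ℕ) :
    harmonicFun (-N, -N) = ((N : ℝ≥0∞) + 1) * ((N : ℝ≥0∞) + 2) := by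
  simpa using harmonicFun_of_nonpos (x := -N) (m := -N) (by omega) (by omega)

end HarmonicFun

def finExtend {n : ℕ} (v : Fin n → ℤ) (i : ℕ) : ℤ := if h : i < n then v ⟨i, h⟩ else 0

lemma finExtend_prefix {n : ℕ} (g : ℕ → ℤ) {i : ℕ} (hi : i < n) :
    finExtend (fun j : Fin n => g j) i = g i :=
  dif_pos hi

lemma finExtend_cons_zero {n : ℕ} (z : ℤ) (v : Fin n → ℤ) :
    finExtend (Fin.cons z v : Fin (n + 1) → ℤ) 0 = z :=
  dif_pos n.succ_pos

lemma finExtend_cons_succ {n : ℕ} (z : ℤ) (v : Fin n → ℤ) :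
    (fun i => finExtend (Fin.cons z v : Fin (n + 1) → ℤ) (i + 1)) = finExtend v := by
  funext i
  by_cases hi : i < n
  · rw [finExtend, dif_pos (by omega), finExtend, dif_pos hi]
    exact Fin.cons_succ (α := fun _ => ℤ) z v ⟨i, hi⟩
  · rw [finExtend, dif_neg (by omega), finExtend, dif_neg hi]

noncomputable def pathWeight {n : ℕ} (v : Fin n → ℤ) : ℝ≥0∞ := ∏ i, animalStepLaw (v i)

lemma tsum_indicator_pathWeight_succ {n : ℕ} (S : Set (Fin (n + 1) → ℤ)) :
    ∑' v, S.indicator pathWeight v =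
      ∑' z, animalStepLaw z * ∑' w, {w | Fin.cons z w ∈ S}.indicator pathWeight w := by
  rw [← (Fin.consEquiv fun _ => ℤ).tsum_eq, ENNReal.tsum_prod']
  refine tsum_congr fun z => ?_
  rw [← ENNReal.tsum_mul_left]
  refine tsum_congr fun w => ?_
  change S.indicator pathWeight (Fin.cons z w) = _
  by_cases h : Fin.cons z w ∈ S <;> simp [Set.indicator, h, pathWeight, Fin.prod_univ_succ]

lemma tsum_pathWeight (n : ℕ) : ∑' v : Fin n → ℤ, pathWeight v = 1 := by
  induction n with
  | zero => simp [pathWeight]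
  | succ n ih =>
    simpa [ih, tsum_animalStepLaw] using
      tsum_indicator_pathWeight_succ (Set.univ : Set (Fin (n + 1) → ℤ))

def ExitsDownWithin (N n : ℕ) (p : ℤ × ℤ) (g : ℕ → ℤ) : Prop :=
  ∃ k ≤ n, (walk g p k).1 = -N ∧ ∀ j ≤ k, (walk g p j).1 ≠ 1

noncomputable def exitDownProb (N n : ℕ) (p : ℤ × ℤ) : ℝ≥0∞ :=
  ∑' v, {v : Fin n → ℤ | ExitsDownWithin N n p (finExtend v)}.indicator pathWeight v

section ExitsDown

variable {N n : ℕ} {p : ℤ × ℤ} {g : ℕ → ℤ}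

lemma ExitsDownWithin.mono {n' : ℕ} (hg : ExitsDownWithin N n p g) (h : n ≤ n') :
    ExitsDownWithin N n' p g :=
  let ⟨k, hk, hk'⟩ := hg
  ⟨k, hk.trans h, hk'⟩

lemma exitsDownWithin_of_fst_eq (h : p.1 = -N) : ExitsDownWithin N n p g :=
  ⟨0, n.zero_le, h, fun j hj => by
    rw [Nat.le_zero.mp hj]
    change p.1 ≠ 1
    omega⟩

lemma not_exitsDownWithin_of_fst_eq_one (h : p.1 = 1) : ¬ExitsDownWithin N n p g :=
  fun ⟨_, _, _, hne⟩ => hne 0 (Nat.zero_le _) h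

lemma not_exitsDownWithin_zero (h : p.1 ≠ -N) : ¬ExitsDownWithin N 0 p g := by
  rintro ⟨k, hk, hkN, -⟩
  rw [Nat.le_zero.mp hk] at hkN
  exact h hkN

lemma exitsDownWithin_congr {g' : ℕ → ℤ} (h : ∀ i < n, g i = g' i) :
    ExitsDownWithin N n p g ↔ ExitsDownWithin N n p g' := by
  have hwalk (k : ℕ) (hk : k ≤ n) : walk g p k = walk g' p k :=
    walk_congr (fun i hi => h i (by omega)) p
  exact exists_congr fun k => and_congr_right fun hk => by
    rw [hwalk k hk]
    exact and_congr_right' (forall₂_congr fun j hj => by rw [hwalk j (hj.trans hk)])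

lemma exitsDownWithin_succ_iff (h₁ : p.1 ≠ -N) (h₂ : p.1 ≠ 1) :
    ExitsDownWithin N (n + 1) p g ↔ ExitsDownWithin N n (step (g 0) p) fun i => g (i + 1) := by
  constructor
  · rintro ⟨_ | k, hk, hkN, hk1⟩
    · exact absurd hkN h₁
    · refine ⟨k, by omega, by rwa [← walk_succ'], fun j hj => ?_⟩
      rw [← walk_succ']
      exact hk1 (j + 1) (by omega)
  · rintro ⟨k, hk, hkN, hk1⟩
    refine ⟨k + 1, by omega, by rwa [walk_succ'], fun j hj => ?_⟩
    rcases j with _ | j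
    · exact h₂
    · rw [walk_succ']
      exact hk1 j (by omega)

lemma exitDownProb_eq_one (h : ∀ g, ExitsDownWithin N n p g) : exitDownProb N n p = 1 := by
  simp [exitDownProb, h, tsum_pathWeight]

lemma exitDownProb_eq_zero (h : ∀ g, ¬ExitsDownWithin N n p g) : exitDownProb N n p = 0 := by
  simp [exitDownProb, h]

lemma exitDownProb_succ (h₁ : p.1 ≠ -N) (h₂ : p.1 ≠ 1) :
    exitDownProb N (n + 1) p = stepMean (exitDownProb N n) p := by
  rw [exitDownProb, tsum_indicator_pathWeight_succ]
  refine tsum_congr fun z => ?_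
  simp only [Set.mem_ofPred_eq, exitsDownWithin_succ_iff h₁ h₂, finExtend_cons_zero,
    finExtend_cons_succ]
  rfl

lemma measure_exitsDownWithin {Ω : Type*} [MeasurableSpace Ω] {P : Measure Ω}
    {ξ : ℕ → Ω → ℤ} (hmeas : ∀ i, Measurable (ξ i)) (hindep : iIndepFun ξ P)
    (hlaw : ∀ i, ∀ z : ℤ, P {ω | ξ i ω = z} = animalStepLaw z) (n : ℕ) (p : ℤ × ℤ) :
    P {ω | ExitsDownWithin N n p fun i => ξ i ω} = exitDownProb N n p := by
  have hprefix (g : ℕ → ℤ) :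
      ExitsDownWithin N n p g ↔ ExitsDownWithin N n p (finExtend fun i : Fin n => g i) :=
    exitsDownWithin_congr fun i hi => (finExtend_prefix g hi).symm
  rw [show {ω | ExitsDownWithin N n p fun i => ξ i ω} =
      {ω | (fun i : Fin n => ξ i ω) ∈ {v | ExitsDownWithin N n p (finExtend v)}} from
    Set.ext fun ω => hprefix _]
  exact hindep.measure_prefix_mem hmeas hlaw n {v | ExitsDownWithin N n p (finExtend v)}

end ExitsDown

noncomputable def survivalProb (N : ℕ) : ℕ → ℤ × ℤ → ℝ≥0∞
  | 0, p => if p.1 = -N ∨ p.1 = 1 then 0 else 1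
  | n + 1, p => if p.1 = -N ∨ p.1 = 1 then 0 else stepMean (survivalProb N n) p

section Bounds

variable {N : ℕ} {p : ℤ × ℤ}

lemma survivalProb_eq_zero (h : p.1 = -N ∨ p.1 = 1) (n : ℕ) : survivalProb N n p = 0 := by
  cases n <;> simp [survivalProb, h]

lemma survivalProb_succ (h₁ : p.1 ≠ -N) (h₂ : p.1 ≠ 1) (n : ℕ) :
    survivalProb N (n + 1) p = stepMean (survivalProb N n) p :=
  if_neg (not_or.2 ⟨h₁, h₂⟩)

lemma survivalProb_le_one (n : ℕ) (p : ℤ × ℤ) : survivalProb N n p ≤ 1 := by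
  induction n generalizing p with
  | zero => unfold survivalProb; split_ifs <;> simp
  | succ n ih =>
    by_cases h : p.1 = -N ∨ p.1 = 1
    · simp [survivalProb_eq_zero h]
    · obtain ⟨h₁, h₂⟩ := not_or.1 h
      rw [survivalProb_succ h₁ h₂, ← stepMean_const 1 p]
      exact stepMean_mono ih p

lemma survivalProb_antitone (p : ℤ × ℤ) : Antitone fun n => survivalProb N n p := by
  refine antitone_nat_of_succ_le fun n => ?_
  induction n generalizing p with
  | zero =>
    by_cases h : p.1 = -N ∨ p.1 = 1
    · simp [survivalProb_eq_zero h]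
    · exact (survivalProb_le_one 1 p).trans (if_neg h).ge
  | succ n ih =>
    by_cases h : p.1 = -N ∨ p.1 = 1
    · simp [survivalProb_eq_zero h]
    · obtain ⟨h₁, h₂⟩ := not_or.1 h
      rw [survivalProb_succ h₁ h₂, survivalProb_succ h₁ h₂]
      exact stepMean_mono ih p

lemma mul_exitDownProb_le (hp : IsState N p) (n : ℕ) :
    harmonicFun (-N, -N) * exitDownProb N n p ≤ harmonicFun p := by
  induction n generalizing p with
  | zero =>
    by_cases h₁ : p.1 = -N
    · rw [exitDownProb_eq_one fun _ => exitsDownWithin_of_fst_eq h₁, mul_one, hp.eq_of_fst_eq h₁]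
    · rw [exitDownProb_eq_zero fun _ => not_exitsDownWithin_zero h₁, mul_zero]
      exact zero_le
  | succ n ih =>
    by_cases h₁ : p.1 = -N
    · rw [exitDownProb_eq_one fun _ => exitsDownWithin_of_fst_eq h₁, mul_one, hp.eq_of_fst_eq h₁]
    by_cases h₂ : p.1 = 1
    · rw [exitDownProb_eq_zero fun _ => not_exitsDownWithin_of_fst_eq_one h₂, mul_zero]
      exact zero_le
    have hint := hp.isInterior h₁ h₂
    calc harmonicFun (-N, -N) * exitDownProb N (n + 1) p
        = stepMean (fun q => harmonicFun (-N, -N) * exitDownProb N n q) p := by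
          rw [exitDownProb_succ h₁ h₂, stepMean_const_mul]
      _ ≤ stepMean harmonicFun p := hint.stepMean_mono fun q hq => ih hq
      _ = harmonicFun p := stepMean_harmonicFun hint.2.1 hint.2.2

lemma harmonicFun_le_mul_add (hp : IsState N p) (n : ℕ) :
    harmonicFun p ≤ harmonicFun (-N, -N) * (exitDownProb N n p + survivalProb N n p) := by
  induction n generalizing p with
  | zero =>
    by_cases h₁ : p.1 = -N
    · rw [exitDownProb_eq_one fun _ => exitsDownWithin_of_fst_eq h₁, hp.eq_of_fst_eq h₁]
      exact le_mul_of_one_le_right zero_le le_self_add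
    by_cases h₂ : p.1 = 1
    · rw [harmonicFun_of_fst_eq_one h₂]
      exact zero_le
    rw [exitDownProb_eq_zero fun _ => not_exitsDownWithin_zero h₁, zero_add, survivalProb,
      if_neg (not_or.2 ⟨h₁, h₂⟩), mul_one]
    exact hp.harmonicFun_le
  | succ n ih =>
    by_cases h₁ : p.1 = -N
    · rw [exitDownProb_eq_one fun _ => exitsDownWithin_of_fst_eq h₁, hp.eq_of_fst_eq h₁]
      exact le_mul_of_one_le_right zero_le le_self_add
    by_cases h₂ : p.1 = 1
    · rw [harmonicFun_of_fst_eq_one h₂]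
      exact zero_le
    have hint := hp.isInterior h₁ h₂
    calc harmonicFun p = stepMean harmonicFun p := (stepMean_harmonicFun hint.2.1 hint.2.2).symm
      _ ≤ stepMean (fun q => harmonicFun (-N, -N) *
            (exitDownProb N n q + survivalProb N n q)) p := hint.stepMean_mono fun q hq => ih hq
      _ = harmonicFun (-N, -N) * (exitDownProb N (n + 1) p + survivalProb N (n + 1) p) := by
          rw [stepMean_const_mul, stepMean_add, exitDownProb_succ h₁ h₂, survivalProb_succ h₁ h₂]

-- Stated additively to avoid truncated subtraction in `ℝ≥0∞`.
lemma survivalProb_add_pow_mul_le {n : ℕ} {B : ℝ≥0∞}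
    (hB : ∀ q, IsState N q → survivalProb N n q ≤ B) (j : ℕ) :
    ∀ p, IsState N p → 1 - p.1 ≤ j → survivalProb N (n + j) p + (2 / 3) ^ j * B ≤ B := by
  induction j with
  | zero =>
    intro p hp hj
    rw [survivalProb_eq_zero (Or.inr (by have := hp.fst_le_one; omega)), pow_zero, one_mul,
      zero_add]
  | succ j ih =>
    intro p hp hj
    by_cases h : p.1 = -N ∨ p.1 = 1
    · rw [survivalProb_eq_zero h, zero_add]
      exact mul_le_of_le_one_left zero_le
        (pow_le_one₀ zero_le (ENNReal.div_le_of_le_mul (by norm_num)))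
    obtain ⟨h₁, h₂⟩ := not_or.1 h
    have hint := hp.isInterior h₁ h₂
    have hup := ih (step 1 p) (hint.isState_step (Or.inl rfl))
      (by rw [step_of_le (by linarith [hint.2.1])]; simp only; omega)
    have hdown (q : ℤ × ℤ) (hq : IsState N q) : survivalProb N (n + j) q ≤ B :=
      (survivalProb_antitone q (n.le_add_right j)).trans (hB q hq)
    calc survivalProb N (n + (j + 1)) p + (2 / 3) ^ (j + 1) * B
        ≤ 2 / 3 * survivalProb N (n + j) (step 1 p) + 3⁻¹ * B + (2 / 3) ^ (j + 1) * B := by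
          rw [← add_assoc, survivalProb_succ h₁ h₂]
          gcongr
          exact hint.stepMean_le hdown
      _ = 2 / 3 * (survivalProb N (n + j) (step 1 p) + (2 / 3) ^ j * B) + 3⁻¹ * B := by ring
      _ ≤ 2 / 3 * B + 3⁻¹ * B := by gcongr
      _ = B := by rw [← add_mul, two_thirds_add_inv_three, one_mul]

lemma survivalProb_le_pow (hp : IsState N p) (k : ℕ) :
    survivalProb N (k * (N + 1)) p ≤ (1 - (2 / 3) ^ (N + 1)) ^ k := by
  induction k generalizing p with
  | zero => simpa using survivalProb_le_one 0 p
  | succ k ih =>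
    have h := survivalProb_add_pow_mul_le (fun q hq => ih hq) (N + 1) p hp
      (by have := hp.neg_le_fst; push_cast; omega)
    rw [Nat.succ_mul, pow_succ', ENNReal.sub_mul fun _ _ => by finiteness, one_mul]
    exact ENNReal.le_sub_of_add_le_right (by finiteness) h

lemma tendsto_survivalProb (hp : IsState N p) :
    Tendsto (fun n => survivalProb N n p) atTop (𝓝 0) := by
  have hc : 1 - (2 / 3 : ℝ≥0∞) ^ (N + 1) < 1 :=
    ENNReal.sub_lt_self ENNReal.one_ne_top one_ne_zero (pow_ne_zero _ (by norm_num))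
  have hinf : ⨅ n, survivalProb N n p = 0 :=
    le_antisymm (ge_of_tendsto' (ENNReal.tendsto_pow_atTop_nhds_zero_of_lt_one hc)
      fun k => iInf_le_of_le _ (survivalProb_le_pow hp k)) zero_le
  exact hinf ▸ tendsto_atTop_iInf (survivalProb_antitone p)

lemma mul_iSup_exitDownProb (hp : IsState N p) :
    harmonicFun (-N, -N) * ⨆ n, exitDownProb N n p = harmonicFun p := by
  refine le_antisymm ?_ ?_
  · rw [ENNReal.mul_iSup]
    exact iSup_le (mul_exitDownProb_le hp)
  · set S := ⨆ n, exitDownProb N n p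
    have hlim : Tendsto (fun n => harmonicFun (-N, -N) * (S + survivalProb N n p)) atTop
        (𝓝 (harmonicFun (-N, -N) * (S + 0))) :=
      ENNReal.Tendsto.const_mul (tendsto_const_nhds.add (tendsto_survivalProb hp))
        (Or.inr (harmonicFun_ne_top _))
    rw [add_zero] at hlim
    exact ge_of_tendsto' hlim fun n => (harmonicFun_le_mul_add hp n).trans
      (by gcongr; exact le_iSup (fun n => exitDownProb N n p) n)

end Bounds

lemma exists_shavedFrom_iff {g : ℕ → ℤ} {m x : ℤ} (hmx : m ≤ x) (N : ℕ) :
    (∃ n, (shavedFrom g m x n).1 = -N ∧ ∀ j ≤ n, (shavedFrom g m x j).1 ≠ 1) ↔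
      ∃ n, ExitsDownWithin N n (x, m) g := by
  simp only [shavedFrom_eq_walk, min_eq_left hmx]
  exact ⟨fun ⟨n, h⟩ => ⟨n, n, le_rfl, h⟩, fun ⟨_, k, _, h⟩ => ⟨k, h⟩⟩

end ShavedWalk

open ShavedWalk in
theorem shaved_walk_exit_problem_general
    {Ω : Type*} [MeasurableSpace Ω] (P : Measure Ω)
    (ξ : ℕ → Ω → ℤ) (hmeas : ∀ i, Measurable (ξ i))
    (hindep : ProbabilityTheory.iIndepFun ξ P)
    (hlaw : ∀ i, ∀ z : ℤ, P {ω | ξ i ω = z} = animalStepLaw z)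
    (m x : ℤ) (hmx : m ≤ x) (hx0 : x ≤ 0) (N : ℕ) (hN : -(N : ℤ) < m) :
    P {ω | ∃ n : ℕ, (shavedFrom (fun i => ξ i ω) m x n).1 = -(N : ℤ) ∧
        ∀ j ≤ n, (shavedFrom (fun i => ξ i ω) m x j).1 ≠ 1} =
      (((x.natAbs : ENNReal) + 1) * ((m.natAbs : ENNReal) + 2)) /
        (((N : ENNReal) + 1) * ((N : ENNReal) + 2)) := by
  have hstate : IsState N (x, m) := Or.inl ⟨hN, hmx, by simp only; omega⟩
  have hevent : {ω | ∃ n : ℕ, (shavedFrom (fun i => ξ i ω) m x n).1 = -(N : ℤ) ∧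
      ∀ j ≤ n, (shavedFrom (fun i => ξ i ω) m x j).1 ≠ 1} =
      ⋃ n, {ω | ExitsDownWithin N n (x, m) fun i => ξ i ω} := by
    ext ω
    rw [Set.mem_iUnion]
    exact exists_shavedFrom_iff hmx N
  have hmono : Monotone fun n => {ω | ExitsDownWithin N n (x, m) fun i => ξ i ω} :=
    fun a b hab ω h => ExitsDownWithin.mono h hab
  rw [hevent, hmono.measure_iUnion]
  simp_rw [measure_exitsDownWithin hmeas hindep hlaw]
  rw [ENNReal.eq_div_iff (by positivity) (by finiteness), ← harmonicFun_of_nonpos hx0 (by omega),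
    ← harmonicFun_neg_natCast]
  exact mul_iSup_exitDownProb hstate

/-- exit problem for the shaved walk. Let m ≤ x ≤ 0 and let Š be
the shaved walk started from (m,x). For every N with −N < m, letting
τ_{−N} (resp. τ₁) be the hitting time of −N (resp. 1) by Š, one has
P(τ_{−N} < τ₁) = (|x|+1)(|m|+2) / ((N+1)(N+2)). -/
theorem shaved_walk_exit_problem
    {Ω : Type*} [MeasurableSpace Ω] (P : Measure Ω) [IsProbabilityMeasure P]
    (ξ : ℕ → Ω → ℤ) (hmeas : ∀ i, Measurable (ξ i))
    (hindep : ProbabilityTheory.iIndepFun ξ P)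
    (hlaw : ∀ i, ∀ z : ℤ, P {ω | ξ i ω = z} = animalStepLaw z)
    (m x : ℤ) (hmx : m ≤ x) (hx0 : x ≤ 0) (N : ℕ) (hN : -(N : ℤ) < m) :
    P {ω | ∃ n : ℕ, (shavedFrom (fun i => ξ i ω) m x n).1 = -(N : ℤ) ∧
        ∀ j ≤ n, (shavedFrom (fun i => ξ i ω) m x j).1 ≠ 1} =
      (((x.natAbs : ENNReal) + 1) * ((m.natAbs : ENNReal) + 2)) /
        (((N : ENNReal) + 1) * ((N : ENNReal) + 2)) :=
  shaved_walk_exit_problem_general P ξ hmeas hindep hlaw m x hmx hx0 N hN
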